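/- arXiv:2005.04139 — 2 statements merged into one kernel-verified Lean document; each statement's English description precedes it below -/
import Mathlib

section
/- For every subset N ⊆ α, the birth–death kernel K satisfies ∑_{M ⊆ α} π(M)·K(M,N) = π(N); that is, the strictly positive weight π (the posterior distribution over neighbourhood structures) is a stationary vector of the Birth–Death MCMC transition kernel K. -/
/-- The strictly positive posterior weight `π` over neighbourhood structures is a
stationary vector of the Birth–Death MCMC transition kernel `K`. -/
theorem stmt_1 {α : Type*} [Fintype α] [DecidableEq α] (p : ℕ) (hp : 2 ≤ p)
    (hcard : Fintype.card α = p - 1)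
    (π : Finset α → ℝ) (hπ : ∀ N : Finset α, 0 < π N)
    (K : Finset α → Finset α → ℝ)
    (hK_birth : ∀ (N : Finset α) (u : α), u ∉ N →
      K N (insert u N) = (1 / ((p : ℝ) - 1)) * (π (insert u N) / π N))
    (hK_death : ∀ (N : Finset α) (u : α), u ∈ N →
      K N (N.erase u) = (1 / ((p : ℝ) - 1)) * (π (N.erase u) / π N))
    (hK_zero : ∀ N M : Finset α,
      (¬ ∃ u ∉ N, M = insert u N) → (¬ ∃ u ∈ N, M = N.erase u) → K N M = 0) :
    ∀ N : Finset α, ∑ M : Finset α, π M * K M N = π N := by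
  intro N
  have hp1 : ((p : ℝ) - 1) ≠ 0 := by
    have : (2 : ℝ) ≤ (p : ℝ) := by exact_mod_cast hp
    linarith
  set f : α → Finset α := fun u => if u ∈ N then N.erase u else insert u N with hf
  -- value at each f u
  have hval : ∀ u : α, π (f u) * K (f u) N = (1 / ((p : ℝ) - 1)) * π N := by
    intro u
    by_cases hu : u ∈ N
    · have hfu : f u = N.erase u := by simp [hf, hu]
      rw [hfu]
      have h1 : u ∉ N.erase u := Finset.notMem_erase u N
      have h2 := hK_birth (N.erase u) u h1
      rw [Finset.insert_erase hu] at h2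
      rw [h2]
      have := (hπ (N.erase u)).ne'
      field_simp
    · have hfu : f u = insert u N := by simp [hf, hu]
      rw [hfu]
      have h1 : u ∈ insert u N := Finset.mem_insert_self u N
      have h2 := hK_death (insert u N) u h1
      rw [Finset.erase_insert hu] at h2
      rw [h2]
      have := (hπ (insert u N)).ne'
      field_simp
  -- f injective
  have hinj : Function.Injective f := by
    intro u v huv
    by_cases hu : u ∈ N <;> by_cases hv : v ∈ N <;>
      simp only [hf, hu, hv, if_pos, if_neg, if_true, if_false] at huv
    · by_contra hne
      have : u ∈ N.erase v := Finset.mem_erase.2 ⟨hne, hu⟩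
      rw [← huv] at this
      exact (Finset.notMem_erase u N) this
    · have h1 : (N.erase u).card + 1 = N.card := Finset.card_erase_add_one hu
      have h2 : (insert v N).card = N.card + 1 := Finset.card_insert_of_notMem hv
      rw [huv, h2] at h1
      omega
    · have h1 : (N.erase v).card + 1 = N.card := Finset.card_erase_add_one hv
      have h2 : (insert u N).card = N.card + 1 := Finset.card_insert_of_notMem hu
      rw [← huv, h2] at h1
      omega
    · by_contra hne
      have : u ∈ insert v N := huv ▸ Finset.mem_insert_self u N
      rcases Finset.mem_insert.1 this with h | h
      · exact hne h
      · exact hu h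
  -- zero off the image
  have hzero : ∀ M ∈ (Finset.univ : Finset (Finset α)),
      M ∉ Finset.univ.image f → π M * K M N = 0 := by
    intro M _ hM
    have : K M N = 0 := by
      apply hK_zero
      · rintro ⟨u, huM, hNe⟩
        apply hM
        have huN : u ∈ N := hNe ▸ Finset.mem_insert_self u M
        have : f u = M := by
          simp only [hf, if_pos huN]
          rw [hNe, Finset.erase_insert huM]
        exact Finset.mem_image.2 ⟨u, Finset.mem_univ u, this⟩
      · rintro ⟨u, huM, hNe⟩
        apply hM
        have huN : u ∉ N := hNe ▸ Finset.notMem_erase u M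
        have : f u = M := by
          simp only [hf, if_neg huN]
          rw [hNe, Finset.insert_erase huM]
        exact Finset.mem_image.2 ⟨u, Finset.mem_univ u, this⟩
    rw [this, mul_zero]
  calc ∑ M : Finset α, π M * K M N
      = ∑ M ∈ Finset.univ.image f, π M * K M N := by
        exact (Finset.sum_subset (Finset.subset_univ _) hzero).symm
    _ = ∑ u : α, π (f u) * K (f u) N :=
        Finset.sum_image (fun a _ b _ h => hinj h)
    _ = ∑ u : α, (1 / ((p : ℝ) - 1)) * π N := by
        exact Finset.sum_congr rfl fun u _ => hval u
    _ = (Fintype.card α : ℝ) * ((1 / ((p : ℝ) - 1)) * π N) := by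
        rw [Finset.sum_const, nsmul_eq_mul, Finset.card_univ]
    _ = π N := by
        rw [hcard, Nat.cast_sub (by omega), Nat.cast_one]
        field_simp
end

section
/- For each index i and every z ∈ {0,1}^q and y ∈ ℝ^p, the log-odds of the i-th binary coordinate in the conditional Gaussian density is given by the logistic-regression form: g(z^{(i←1)}, y) − g(z^{(i←0)}, y) = λ_i + ∑_{j ≠ i} λ̃_{ij} z_j + η_iᵀ y − (1/2) yᵀ Φ_i y, where z^{(i←c)} denotes z with its i-th coordinate replaced by c, and λ̃_{ij} = λ_{ij} when i > j and λ̃_{ij} = λ_{ji} when j > i. -/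
open Matrix

/-- In the conditional Gaussian density of Cheng et al., the log-odds of the
`i`-th binary coordinate given all other variables has the logistic-regression
form `λ_i + ∑_{j ≠ i} λ̃_{ij} z_j + η_iᵀ y − (1/2) yᵀ Φ_i y`. -/
theorem stmt_3 {q p : ℕ}
    (lam : Fin q → ℝ) (Lam : Fin q → Fin q → ℝ)
    (η0 : Fin p → ℝ) (η : Fin q → Fin p → ℝ)
    (Φ0 : Matrix (Fin p) (Fin p) ℝ) (Φ : Fin q → Matrix (Fin p) (Fin p) ℝ)
    (hΦ0 : Φ0.IsSymm) (hΦ : ∀ i, (Φ i).IsSymm)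
    (g : (Fin q → ℝ) → (Fin p → ℝ) → ℝ)
    (hg : ∀ z y, g z y =
      (∑ i, lam i * z i)
      + (∑ i, ∑ j ∈ Finset.univ.filter (fun j => j < i), Lam i j * z i * z j)
      + y ⬝ᵥ (η0 + ∑ i, z i • η i)
      - (1 / 2) * (y ⬝ᵥ (Φ0 + ∑ i, z i • Φ i).mulVec y))
    (i : Fin q) (z : Fin q → ℝ) (hz : ∀ j, z j = 0 ∨ z j = 1) (y : Fin p → ℝ) :
    g (Function.update z i 1) y - g (Function.update z i 0) y =
      lam i
      + (∑ j ∈ Finset.univ.erase i, (if j < i then Lam i j else Lam j i) * z j)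
      + (η i) ⬝ᵥ y
      - (1 / 2) * (y ⬝ᵥ (Φ i).mulVec y) := by
  set u := Function.update z i (1:ℝ) with hu
  set v := Function.update z i (0:ℝ) with hv
  have hu_ne : ∀ j, j ≠ i → u j = z j := fun j hj => Function.update_of_ne hj _ _
  have hv_ne : ∀ j, j ≠ i → v j = z j := fun j hj => Function.update_of_ne hj _ _
  have hui : u i = 1 := Function.update_self _ _ _
  have hvi : v i = 0 := Function.update_self _ _ _
  rw [hg, hg]
  -- linear part
  have hA : (∑ j, lam j * u j) - (∑ j, lam j * v j) = lam i := by
    rw [← Finset.sum_sub_distrib]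
    rw [Finset.sum_eq_single i]
    · rw [hui, hvi]; ring
    · intro b _ hb; rw [hu_ne b hb, hv_ne b hb]; ring
    · intro h; exact absurd (Finset.mem_univ i) h
  -- quadratic-in-z part
  have hB : (∑ a, ∑ b ∈ Finset.univ.filter (fun b => b < a), Lam a b * u a * u b)
      - (∑ a, ∑ b ∈ Finset.univ.filter (fun b => b < a), Lam a b * v a * v b)
      = ∑ j ∈ Finset.univ.erase i, (if j < i then Lam i j else Lam j i) * z j := by
    rw [← Finset.sum_sub_distrib]
    have key : ∀ a : Fin q,
        (∑ b ∈ Finset.univ.filter (fun b => b < a), Lam a b * u a * u b)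
        - (∑ b ∈ Finset.univ.filter (fun b => b < a), Lam a b * v a * v b)
        = if a = i then ∑ b ∈ Finset.univ.filter (fun b => b < i), Lam i b * z b
          else if i < a then Lam a i * z a else 0 := by
      intro a
      rw [← Finset.sum_sub_distrib]
      by_cases hai : a = i
      · subst hai
        simp only [if_pos rfl]
        apply Finset.sum_congr rfl
        intro b hb
        have hbi : b ≠ a := ne_of_lt (Finset.mem_filter.mp hb).2
        rw [hui, hvi, hu_ne b hbi, hv_ne b hbi]; ring
      · rw [if_neg hai]
        by_cases hia : i < a
        · rw [if_pos hia]
          rw [Finset.sum_eq_single_of_mem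
            (s := Finset.univ.filter (fun b => b < a))
            (f := fun b => Lam a b * u a * u b - Lam a b * v a * v b) i
            (Finset.mem_filter.mpr ⟨Finset.mem_univ i, hia⟩)
            (fun b _ hbi => by
              rw [hu_ne b hbi, hv_ne b hbi, hu_ne a hai, hv_ne a hai]; ring)]
          rw [hui, hvi, hu_ne a hai, hv_ne a hai]; ring
        · rw [if_neg hia]
          apply Finset.sum_eq_zero
          intro b hb
          have hbi : b ≠ i := by
            intro hbe; subst hbe; exact hia (Finset.mem_filter.mp hb).2
          rw [hu_ne b hbi, hv_ne b hbi, hu_ne a hai, hv_ne a hai]; ring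
    calc (∑ a, ((∑ b ∈ Finset.univ.filter (fun b => b < a), Lam a b * u a * u b)
            - ∑ b ∈ Finset.univ.filter (fun b => b < a), Lam a b * v a * v b))
        = ∑ a, (if a = i then ∑ b ∈ Finset.univ.filter (fun b => b < i), Lam i b * z b
            else if i < a then Lam a i * z a else 0) := by
          exact Finset.sum_congr rfl fun a _ => key a
      _ = (∑ b ∈ Finset.univ.filter (fun b => b < i), Lam i b * z b)
            + ∑ a ∈ Finset.univ.erase i, (if i < a then Lam a i * z a else 0) := by
          rw [← Finset.add_sum_erase _ _ (Finset.mem_univ i), if_pos rfl]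
          congr 1
          apply Finset.sum_congr rfl
          intro a ha
          rw [if_neg (Finset.ne_of_mem_erase ha)]
      _ = ∑ j ∈ Finset.univ.erase i, (if j < i then Lam i j else Lam j i) * z j := by
          rw [← Finset.sum_filter_add_sum_filter_not (Finset.univ.erase i) (fun j => j < i)
            (fun j => (if j < i then Lam i j else Lam j i) * z j)]
          congr 1
          · rw [show (Finset.univ.erase i).filter (fun j => j < i)
                = Finset.univ.filter (fun b => b < i) by
              ext j; simp only [Finset.mem_filter, Finset.mem_erase, Finset.mem_univ,
                true_and, and_true]
              exact ⟨fun h => h.2, fun h => ⟨ne_of_lt h, h⟩⟩]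
            apply Finset.sum_congr rfl
            intro j hj
            rw [if_pos (Finset.mem_filter.mp hj).2]
          · rw [Finset.sum_filter]
            apply Finset.sum_congr rfl
            intro j hj
            have hji : j ≠ i := Finset.ne_of_mem_erase hj
            by_cases h : j < i
            · simp [h, lt_asymm h]
            · have : i < j := lt_of_le_of_ne (not_lt.mp h) (Ne.symm hji)
              simp [h, this]
  -- η part
  have hC : y ⬝ᵥ (η0 + ∑ j, u j • η j) - y ⬝ᵥ (η0 + ∑ j, v j • η j) = (η i) ⬝ᵥ y := by
    rw [← dotProduct_sub]
    have : (η0 + ∑ j, u j • η j) - (η0 + ∑ j, v j • η j) = η i := by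
      have : (∑ j, u j • η j) - (∑ j, v j • η j) = η i := by
        rw [← Finset.sum_sub_distrib]
        rw [Finset.sum_eq_single i]
        · rw [hui, hvi]; simp
        · intro b _ hb; rw [hu_ne b hb, hv_ne b hb]; simp
        · intro h; exact absurd (Finset.mem_univ i) h
      rw [add_sub_add_left_eq_sub, this]
    rw [this, dotProduct_comm]
  -- Φ part
  have hD : y ⬝ᵥ (Φ0 + ∑ j, u j • Φ j).mulVec y - y ⬝ᵥ (Φ0 + ∑ j, v j • Φ j).mulVec y
      = y ⬝ᵥ (Φ i).mulVec y := by
    rw [← dotProduct_sub, ← Matrix.sub_mulVec]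
    have : (Φ0 + ∑ j, u j • Φ j) - (Φ0 + ∑ j, v j • Φ j) = Φ i := by
      have : (∑ j, u j • Φ j) - (∑ j, v j • Φ j) = Φ i := by
        rw [← Finset.sum_sub_distrib]
        rw [Finset.sum_eq_single i]
        · rw [hui, hvi]; simp
        · intro b _ hb; rw [hu_ne b hb, hv_ne b hb]; simp
        · intro h; exact absurd (Finset.mem_univ i) h
      rw [add_sub_add_left_eq_sub, this]
    rw [this]
  linarith
end
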